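/- For the affine Lie algebra g̃ of a simple complex Lie algebra g of type A, D, E, with the invariant bilinear form normalized so that (α,α)=2 for roots of g and (D,D)=0 for the principal gradation element D, the map x ↦ x - ((ρ,x)/h)·c from the Cartan subalgebra h of g to the orthogonal complement h' of ℂc ⊕ ℂD in the affine Cartan subalgebra h̃ = h ⊕ ℂc ⊕ ℂ∂ is an orthogonal isomorphism h → h' (it is a linear isomorphism preserving the bilinear form). -/
import Mathlib


/-!
STATEMENT 1.  For the affine Lie algebra `g̃` of a simple complex Lie algebra `g` of type
A, D, E, with the invariant bilinear form normalized so that `(α,α) = 2` for roots of `g`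
and `(D,D) = 0` for the principal gradation element `D`, the map
`x ↦ x - ((ρ,x)/h)·c` from the Cartan subalgebra `h` of `g` to the orthogonal complement
`h'` of `ℂc ⊕ ℂD` in the affine Cartan subalgebra `h̃ = h ⊕ ℂc ⊕ ℂ∂` is an orthogonal
isomorphism `h → h'` (a linear isomorphism preserving the bilinear form).

Modelling: `h̃` is realised as `V × ℂ × ℂ`, where `(x, a, b)` stands for
`x + a·c + b·∂`; `Φ` is the normalized invariant form of `g` restricted to the Cartan
subalgebra `V = h`, `hρ ∈ h` is the element corresponding to `ρ` under `Φ`, and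
`hcox` is the Coxeter number `h`.  The affine invariant form satisfies `(h, c) = (h, ∂) = 0`
for `h ∈ h`, `(c, c) = 0`, `(c, ∂) = 1` and `(∂, ∂) = s`, where `s` is fixed by the
normalization `(D, D) = 0` for the principal gradation element `D = h_ρ + h·∂`
(characterized by `[D, e_i] = e_i`, `[D, f_i] = -f_i`); this forces
`s = -(ρ,ρ)/h²`.
-/

theorem affine_cartan_orthogonal_isomorphism
    (V : Type*) [AddCommGroup V] [Module ℂ V] [FiniteDimensional ℂ V]
    (Φ : V →ₗ[ℂ] V →ₗ[ℂ] ℂ)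
    (hΦsymm : ∀ x y, Φ x y = Φ y x)
    (hΦnondeg : ∀ x, (∀ y, Φ x y = 0) → x = 0)
    (hρ : V)                    -- the element of h corresponding to ρ
    (hcox : ℂ) (hcox_ne : hcox ≠ 0)   -- the Coxeter number h (= dual Coxeter number)
    -- the invariant bilinear form on h̃ = h ⊕ ℂc ⊕ ℂ∂, normalized so that (D,D) = 0 :
    (form : (V × ℂ × ℂ) → (V × ℂ × ℂ) → ℂ)
    (hform : ∀ (x : V) (a b : ℂ) (y : V) (a' b' : ℂ),
      form (x, a, b) (y, a', b') =
        Φ x y + a * b' + b * a' - (Φ hρ hρ / hcox ^ 2) * (b * b'))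
    -- the central element c and the principal gradation element D :
    (c D : V × ℂ × ℂ) (hc : c = (0, 1, 0)) (hD : D = (hρ, 0, hcox)) :
    -- the map x ↦ x - ((ρ,x)/h)·c is an orthogonal isomorphism from h onto
    -- h' = (ℂc ⊕ ℂD)^⊥ ⊂ h̃ :
    Function.Injective (fun x : V => ((x, -(Φ hρ x) / hcox, 0) : V × ℂ × ℂ)) ∧
    (∀ x : V, form ((x, -(Φ hρ x) / hcox, 0) : V × ℂ × ℂ) c = 0 ∧
              form ((x, -(Φ hρ x) / hcox, 0) : V × ℂ × ℂ) D = 0) ∧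
    (∀ w : V × ℂ × ℂ, form w c = 0 → form w D = 0 →
       ∃ x : V, ((x, -(Φ hρ x) / hcox, 0) : V × ℂ × ℂ) = w) ∧
    (∀ x y : V,
      form ((x, -(Φ hρ x) / hcox, 0) : V × ℂ × ℂ) ((y, -(Φ hρ y) / hcox, 0) : V × ℂ × ℂ)
        = Φ x y) := by
  subst hc hD
  refine ⟨?_, ?_, ?_, ?_⟩
  · intro x y hxy
    exact (Prod.mk.injEq _ _ _ _).mp hxy |>.1
  · intro x
    constructor
    · rw [hform]; simp
    · rw [hform]
      field_simp
      rw [hΦsymm x hρ]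
      ring
  · rintro ⟨x, a, b⟩ h1 h2
    rw [hform] at h1 h2
    simp at h1
    subst h1
    simp at h2
    refine ⟨x, ?_⟩
    have : a = -Φ hρ x / hcox := by
      rw [hΦsymm hρ x]
      field_simp
      linear_combination h2
    rw [this]
  · intro x y
    rw [hform]; ring
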